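/- For nonempty A₁, A₂ ⊆ ℕ with A₁ ≠ {0}, setting 𝔪ᵢ := min(Aᵢ) and 𝔮ᵢ := gcd(Aᵢ − 𝔪ᵢ), the set A₁ ⋆ A₂ has minimum 𝔪₁·𝔪₂ and gcd((A₁ ⋆ A₂) − 𝔪₁𝔪₂) = gcd(𝔮₂, 𝔮₁·𝔪₂). -/

import Mathlib

open Pointwise

/-- `n ⋆ B`: the `n`-fold sumset of `B`, with `0 ⋆ B = {0}`. -/
def nstar : ℕ → Set ℕ → Set ℕ
  | 0, _ => {0}
  | n + 1, B => B + nstar n B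

/-- `A ⋆ B := ⋃_{a ∈ A} a ⋆ B`. -/
def starSet (A B : Set ℕ) : Set ℕ := ⋃ a ∈ A, nstar a B

/-- The gcd of a set of naturals: the greatest common divisor
(`0` if the set has no positive common-divisor bound, e.g. `S ⊆ {0}` or `S = ∅`). -/
noncomputable def setGcd (S : Set ℕ) : ℕ := sSup {d : ℕ | ∀ a ∈ S, d ∣ a}

/-!
Write `mᵢ = min Aᵢ`. Every element `x` of `a ⋆ A₂` satisfies `x ≥ a m₂` and `x ≡ a m₂ (mod q₂)`,
while `a m₂ ≡ m₁ m₂ (mod q₁ m₂)`; since `m₁ m₂ ∈ A₁ ⋆ A₂`, this gives the minimum and shows that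
`gcd (q₂, q₁ m₂)` divides every `x - m₁ m₂`. Conversely a common divisor `d` of the `x - m₁ m₂`
divides each `a m₂ - m₁ m₂` because `a m₂ ∈ a ⋆ A₂`, and, for some `a₀ ≠ 0` in `A₁`, it divides
`b - m₂`, the difference of `b + (a₀ - 1) m₂` and `a₀ m₂`, both in `a₀ ⋆ A₂`.
-/

section setGcd

variable {S : Set ℕ} {d : ℕ}

lemma setGcd_eq_zero_of_subset_zero (hS : S ⊆ {0}) : setGcd S = 0 := by
  have hall : {d : ℕ | ∀ a ∈ S, d ∣ a} = Set.univ :=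
    Set.eq_univ_of_forall fun d a ha => (hS ha) ▸ dvd_zero d
  rw [setGcd, hall, Set.Infinite.Nat.sSup_eq_zero Set.infinite_univ]

lemma isGreatest_setGcd {a₀ : ℕ} (ha₀ : a₀ ∈ S) (ha₀0 : a₀ ≠ 0) :
    IsGreatest {d : ℕ | ∀ a ∈ S, d ∣ a} (setGcd S) := by
  have hbdd : BddAbove {d : ℕ | ∀ a ∈ S, d ∣ a} :=
    ⟨a₀, fun d hd => Nat.le_of_dvd (Nat.pos_of_ne_zero ha₀0) (hd a₀ ha₀)⟩
  exact ⟨Nat.sSup_mem ⟨1, fun a _ => one_dvd a⟩ hbdd, fun d hd => le_csSup hbdd hd⟩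

lemma setGcd_dvd {a : ℕ} (ha : a ∈ S) : setGcd S ∣ a := by
  rcases eq_or_ne a 0 with rfl | ha0
  · exact dvd_zero _
  · exact (isGreatest_setGcd ha ha0).1 a ha

lemma dvd_setGcd (h : ∀ a ∈ S, d ∣ a) : d ∣ setGcd S := by
  by_cases hS : S ⊆ {0}
  · rw [setGcd_eq_zero_of_subset_zero hS]
    exact dvd_zero d
  obtain ⟨a₀, ha₀, ha₀0⟩ : ∃ a ∈ S, a ≠ 0 := by
    simpa [Set.subset_singleton_iff] using hS
  have hgcd := isGreatest_setGcd ha₀ ha₀0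
  -- `lcm d (setGcd S)` is again a common divisor, hence no larger than `setGcd S`.
  have hlcm : Nat.lcm d (setGcd S) ∈ {d : ℕ | ∀ a ∈ S, d ∣ a} :=
    fun a ha => Nat.lcm_dvd (h a ha) (hgcd.1 a ha)
  have hlcm_pos : 0 < Nat.lcm d (setGcd S) :=
    Nat.pos_of_dvd_of_pos (hlcm a₀ ha₀) (Nat.pos_of_ne_zero ha₀0)
  have hlcm_eq : Nat.lcm d (setGcd S) = setGcd S :=
    le_antisymm (hgcd.2 hlcm) (Nat.le_of_dvd hlcm_pos (Nat.dvd_lcm_right _ _))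
  exact hlcm_eq ▸ Nat.dvd_lcm_left _ _

lemma dvd_setGcd_iff : d ∣ setGcd S ↔ ∀ a ∈ S, d ∣ a :=
  ⟨fun h _ ha => h.trans (setGcd_dvd ha), dvd_setGcd⟩

lemma setGcd_mul (c : ℕ) : setGcd S * c = setGcd ((· * c) '' S) := by
  rcases Nat.eq_zero_or_pos c with rfl | hc
  · rw [mul_zero, setGcd_eq_zero_of_subset_zero]
    rintro _ ⟨a, _, rfl⟩
    exact mul_zero a
  refine Nat.dvd_antisymm (dvd_setGcd ?_) ?_
  · rintro _ ⟨a, ha, rfl⟩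
    exact Nat.mul_dvd_mul_right (setGcd_dvd ha) c
  obtain ⟨e, he⟩ : c ∣ setGcd ((· * c) '' S) :=
    dvd_setGcd fun _ ⟨a, _, hac⟩ => hac ▸ Dvd.intro_left a rfl
  rw [he, mul_comm c]
  refine Nat.mul_dvd_mul_right (dvd_setGcd fun a ha => ?_) c
  have hea : c * e ∣ a * c := he ▸ setGcd_dvd ⟨a, ha, rfl⟩
  exact Nat.dvd_of_mul_dvd_mul_right hc (mul_comm c e ▸ hea)

lemma dvd_setGcd_mul_iff {c : ℕ} : d ∣ setGcd S * c ↔ ∀ a ∈ S, d ∣ a * c := by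
  rw [setGcd_mul, dvd_setGcd_iff, Set.forall_mem_image]

end setGcd

section nstar

variable {B : Set ℕ}

lemma mul_mem_nstar {b : ℕ} (hb : b ∈ B) (n : ℕ) : n * b ∈ nstar n B := by
  induction n with
  | zero => simp [nstar]
  | succ n ih => simpa [nstar, add_mul, add_comm] using Set.add_mem_add hb ih

lemma mul_le_of_mem_nstar {m n x : ℕ} (hm : ∀ b ∈ B, m ≤ b) (hx : x ∈ nstar n B) :
    n * m ≤ x := by
  induction n generalizing x with
  | zero => exact (zero_mul m).symm ▸ Nat.zero_le x
  | succ n ih =>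
    obtain ⟨b, hb, y, hy, rfl⟩ := hx
    rw [add_mul, one_mul, add_comm]
    exact Nat.add_le_add (hm b hb) (ih hy)

lemma modEq_of_mem_nstar {m n x d : ℕ} (hm : ∀ b ∈ B, b ≡ m [MOD d]) (hx : x ∈ nstar n B) :
    x ≡ n * m [MOD d] := by
  induction n generalizing x with
  | zero => simp only [nstar, Set.mem_singleton_iff] at hx; simp [hx, Nat.ModEq.refl]
  | succ n ih =>
    obtain ⟨b, hb, y, hy, rfl⟩ := hx
    rw [add_mul, one_mul, add_comm (n * m)]
    exact (hm b hb).add (ih hy)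

end nstar

lemma Nat.dvd_sub_iff_modEq {x m d : ℕ} (h : m ≤ x) : d ∣ x - m ↔ x ≡ m [MOD d] :=
  (Nat.modEq_iff_dvd' h).symm.trans Nat.ModEq.comm

section starSet

variable {A B : Set ℕ}

lemma mem_starSet {x : ℕ} : x ∈ starSet A B ↔ ∃ a ∈ A, x ∈ nstar a B := by
  simp [starSet]

lemma sInf_starSet (hA : A.Nonempty) (hB : B.Nonempty) :
    sInf (starSet A B) = sInf A * sInf B := by
  have hmem : sInf A * sInf B ∈ starSet A B :=
    mem_starSet.2 ⟨sInf A, Nat.sInf_mem hA, mul_mem_nstar (Nat.sInf_mem hB) _⟩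
  refine le_antisymm (Nat.sInf_le hmem) (le_csInf ⟨_, hmem⟩ fun x hx => ?_)
  obtain ⟨a, ha, hx⟩ := mem_starSet.1 hx
  calc sInf A * sInf B ≤ a * sInf B := Nat.mul_le_mul_right _ (Nat.sInf_le ha)
    _ ≤ x := mul_le_of_mem_nstar (fun b hb => Nat.sInf_le hb) hx

lemma forall_mem_starSet_modEq_iff {a₀ d : ℕ} (ha₀ : a₀ ∈ A) (ha₀0 : a₀ ≠ 0)
    (hB : B.Nonempty) :
    (∀ x ∈ starSet A B, x ≡ sInf A * sInf B [MOD d]) ↔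
      (∀ b ∈ B, b ≡ sInf B [MOD d]) ∧ ∀ a ∈ A, a * sInf B ≡ sInf A * sInf B [MOD d] := by
  have hm : sInf B ∈ B := Nat.sInf_mem hB
  constructor
  · intro h
    have hmul : ∀ a ∈ A, a * sInf B ≡ sInf A * sInf B [MOD d] :=
      fun a ha => h _ (mem_starSet.2 ⟨a, ha, mul_mem_nstar hm a⟩)
    refine ⟨fun b hb => ?_, hmul⟩
    obtain ⟨k, rfl⟩ := Nat.exists_eq_succ_of_ne_zero ha₀0
    have hsum : b + k * sInf B ≡ sInf A * sInf B [MOD d] :=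
      h _ (mem_starSet.2 ⟨k + 1, ha₀, Set.add_mem_add hb (mul_mem_nstar hm k)⟩)
    refine Nat.ModEq.add_right_cancel' (k * sInf B) (hsum.trans ?_)
    simpa [add_mul, add_comm] using (hmul _ ha₀).symm
  · rintro ⟨hB, hA⟩ x hx
    obtain ⟨a, ha, hx⟩ := mem_starSet.1 hx
    exact (modEq_of_mem_nstar hB hx).trans (hA a ha)

lemma forall_mem_starSet_dvd_sub_iff {a₀ d : ℕ} (ha₀ : a₀ ∈ A) (ha₀0 : a₀ ≠ 0)
    (hB : B.Nonempty) :
    (∀ x ∈ starSet A B, d ∣ x - sInf A * sInf B) ↔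
      (∀ b ∈ B, d ∣ b - sInf B) ∧ ∀ a ∈ A, d ∣ (a - sInf A) * sInf B := by
  have hmin := sInf_starSet ⟨a₀, ha₀⟩ hB
  calc (∀ x ∈ starSet A B, d ∣ x - sInf A * sInf B)
      ↔ ∀ x ∈ starSet A B, x ≡ sInf A * sInf B [MOD d] :=
        forall₂_congr fun x hx => Nat.dvd_sub_iff_modEq (hmin ▸ Nat.sInf_le hx)
    _ ↔ (∀ b ∈ B, b ≡ sInf B [MOD d]) ∧ ∀ a ∈ A, a * sInf B ≡ sInf A * sInf B [MOD d] :=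
        forall_mem_starSet_modEq_iff ha₀ ha₀0 hB
    _ ↔ _ := by
        refine and_congr (forall₂_congr fun b hb => ?_) (forall₂_congr fun a ha => ?_)
        · exact (Nat.dvd_sub_iff_modEq (Nat.sInf_le hb)).symm
        · rw [Nat.sub_mul]
          exact (Nat.dvd_sub_iff_modEq (Nat.mul_le_mul_right _ (Nat.sInf_le ha))).symm

end starSet

theorem gcd_param_star (A₁ A₂ : Set ℕ) (h₁ : A₁.Nonempty) (h₂ : A₂.Nonempty)
    (hA₁ : A₁ ≠ {0}) :
    sInf (starSet A₁ A₂) = sInf A₁ * sInf A₂ ∧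
    setGcd ((fun a => a - sInf A₁ * sInf A₂) '' starSet A₁ A₂) =
      Nat.gcd (setGcd ((fun a => a - sInf A₂) '' A₂))
        (setGcd ((fun a => a - sInf A₁) '' A₁) * sInf A₂) := by
  obtain ⟨a₀, ha₀, ha₀0⟩ : ∃ a ∈ A₁, a ≠ 0 := by
    contrapose! hA₁
    exact Set.eq_singleton_iff_nonempty_unique_mem.2 ⟨h₁, hA₁⟩
  refine ⟨sInf_starSet h₁ h₂, Nat.dvd_left_iff_eq.1 fun d => ?_⟩
  simp only [Nat.dvd_gcd_iff, dvd_setGcd_mul_iff, dvd_setGcd_iff, Set.forall_mem_image]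
  exact forall_mem_starSet_dvd_sub_iff ha₀ ha₀0 h₂
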